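/- arXiv:1408.3493 — 6 statements merged into one kernel-verified Lean document; each statement's English description precedes it below -/
import Mathlib

section
/- Let $a_1,a_2>0$, set $A=(1+a_1)(1+a_2)$, $B=a_1a_2$, and let $N_1,N_2$ be nonnegative integers. Define $g(\alpha_1,\alpha_2)=(3A-4B)\alpha_1+\frac{1+a_1}{a_2}(A-2B)\alpha_2-AN_1-\frac{1+a_1}{a_2}AN_2-\left(4+2\frac{1+a_1}{a_2}\right)(A-B)$ and $h(\alpha_1,\alpha_2)=\frac{4B-A}{A}(\alpha_1-1)+\frac{2a_1}{1+a_2}(\alpha_2-1)-(N_1+1)$, and let $\Sigma=\{(\alpha_1,\alpha_2)\in\mathbb{R}^2 : \alpha_1\ge 1,\ \alpha_2>1,\ g(\alpha_1,\alpha_2)=0,\ h(\alpha_1,\alpha_2)>0\}$. Then $\Sigma\neq\emptyset$ if and only if both of the following hold: $3A-4B>0$, and, in case $A-4B>0$, $(A-4B)(N_1+1)<2a_1(1+a_1)(N_2+1)$. -/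
/-!
With `c = (1 + a₁) / a₂` one has `A * h = A * (2α₁ + cα₂ - M) - g` for a constant `M`, so on the
line `g = 0` the condition `h > 0` is the open half-plane `2α₁ + cα₂ > M`, and `Σ ≠ ∅` asks
whether that line meets the half-plane inside the quadrant `α₁ ≥ 1, α₂ > 1`. As `g(1, 1) < 0`,
the line meets the quadrant iff `3A - 4B > 0`. When its slope is negative (`A > 2B`) the best
point is the one on `α₁ = 1`; otherwise `2α₁ + cα₂` is unbounded along it.
-/

theorem exists_line_point_linear_gt_iff {P Q K u v M : ℝ} (hu : 0 ≤ u) (hv : 0 ≤ v)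
    (hD : 0 < v * P - u * Q) (hK : P + Q < K) :
    (∃ x y : ℝ, 1 ≤ x ∧ 1 < y ∧ P * x + Q * y = K ∧ M < u * x + v * y) ↔
      0 < P ∧ (0 < Q → v * P - u * Q < v * K - M * Q) := by
  constructor
  · rintro ⟨x, y, hx, hy, hline, hM⟩
    have hP : 0 < P := by
      by_contra! hP
      have hQ : Q < 0 := by nlinarith
      nlinarith
    refine ⟨hP, fun hQ => ?_⟩
    nlinarith [mul_lt_mul_of_pos_left hM hQ, mul_le_mul_of_nonneg_left hx hD.le]
  · rintro ⟨hP, hQK⟩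
    rcases lt_or_ge 0 Q with hQ | hQ
    · refine ⟨1, (K - P) / Q, le_rfl, ?_, ?_, ?_⟩
      · rw [lt_div_iff₀ hQ]; linarith
      · field_simp; ring
      · have : u * 1 + v * ((K - P) / Q) = (u * Q + v * (K - P)) / Q := by field_simp
        rw [this, lt_div_iff₀ hQ]
        linarith [hQK hQ]
    · obtain ⟨y, hy, hyD⟩ := ((Filter.eventually_gt_atTop 1).and
        (Filter.eventually_gt_atTop ((M * P - u * K) / (v * P - u * Q)))).exists
      refine ⟨(K - Q * y) / P, y, ?_, hy, ?_, ?_⟩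
      · rw [le_div_iff₀ hP]; nlinarith
      · field_simp; ring
      · have : u * ((K - Q * y) / P) + v * y = (u * K + (v * P - u * Q) * y) / P := by
          field_simp; ring
        rw [this, lt_div_iff₀ hP]
        rw [div_lt_iff₀ hD] at hyD
        linarith

theorem imp_mul_lt_iff_of_lt {s t n R : ℝ} (hst : s < t) (hn : 0 ≤ n) (hR : 0 < R) :
    (0 < t → s * n < R) ↔ (0 < s → s * n < R) :=
  ⟨fun H hs => H (hs.trans hst), fun H _ =>
    (le_or_gt s 0).elim (fun hs => (mul_nonpos_of_nonpos_of_nonneg hs hn).trans_lt hR) H⟩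

/-- The set `Σ` is nonempty iff `3A - 4B > 0` and, in case `A - 4B > 0`,
`(A-4B)(N₁+1) < 2a₁(1+a₁)(N₂+1)`. -/
theorem sigma_nonempty_iff (a₁ a₂ : ℝ) (ha₁ : 0 < a₁) (ha₂ : 0 < a₂) (N₁ N₂ : ℕ)
    (A B : ℝ) (hA : A = (1 + a₁) * (1 + a₂)) (hB : B = a₁ * a₂)
    (g h : ℝ → ℝ → ℝ)
    (hg : ∀ α₁ α₂ : ℝ, g α₁ α₂ =
      (3 * A - 4 * B) * α₁ + (1 + a₁) / a₂ * (A - 2 * B) * α₂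
        - A * N₁ - (1 + a₁) / a₂ * A * N₂ - (4 + 2 * (1 + a₁) / a₂) * (A - B))
    (hh : ∀ α₁ α₂ : ℝ, h α₁ α₂ =
      (4 * B - A) / A * (α₁ - 1) + 2 * a₁ / (1 + a₂) * (α₂ - 1) - (N₁ + 1)) :
    (∃ α₁ α₂ : ℝ, 1 ≤ α₁ ∧ 1 < α₂ ∧ g α₁ α₂ = 0 ∧ 0 < h α₁ α₂) ↔
      (0 < 3 * A - 4 * B ∧
        (0 < A - 4 * B → (A - 4 * B) * (N₁ + 1) < 2 * a₁ * (1 + a₁) * (N₂ + 1))) := by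
  have hA0 : 0 < A := hA ▸ by positivity
  have hB0 : 0 < B := hB ▸ by positivity
  obtain ⟨c, hc⟩ : ∃ c, (1 + a₁) / a₂ = c := ⟨_, rfl⟩
  have hc0 : 0 < c := hc ▸ by positivity
  obtain ⟨K, hK⟩ : ∃ K, A * N₁ + c * A * N₂ + (4 + 2 * c) * (A - B) = K := ⟨_, rfl⟩
  obtain ⟨M, hM⟩ : ∃ M : ℝ, 2 * N₁ + c * N₂ + 4 + 2 * c = M := ⟨_, rfl⟩
  have hg' : ∀ x y, g x y = (3 * A - 4 * B) * x + c * (A - 2 * B) * y - K := fun x y => by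
    subst hc hK; rw [hg]; ring
  have hAh : ∀ x y, A * h x y = A * (2 * x + c * y - M) - g x y := fun x y => by
    subst hc hK hM hA hB; rw [hg', hh]; field_simp; ring
  have hgh : ∀ x y, g x y = 0 ∧ 0 < h x y ↔
      (3 * A - 4 * B) * x + c * (A - 2 * B) * y = K ∧ M < 2 * x + c * y := fun x y => by
    refine (and_congr_right fun hgxy => ?_).trans (and_congr_left' (by rw [hg', sub_eq_zero]))
    rw [← mul_pos_iff_of_pos_left hA0, hAh, hgxy, sub_zero, mul_pos_iff_of_pos_left hA0, sub_pos]
  have hg11 : (3 * A - 4 * B) + c * (A - 2 * B) < K := by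
    have : K - (3 * A - 4 * B) - c * (A - 2 * B) = A * (N₁ + 1) + c * A * (N₂ + 1) := by
      rw [← hK]; ring
    linarith [show 0 < A * (N₁ + 1) + c * A * (N₂ + 1) by positivity]
  have hD : c * (3 * A - 4 * B) - 2 * (c * (A - 2 * B)) = c * A := by ring
  have hcond : c * A < c * K - M * (c * (A - 2 * B)) ↔
      (A - 4 * B) * (N₁ + 1) < 2 * a₁ * (1 + a₁) * (N₂ + 1) := by
    have : c * K - M * (c * (A - 2 * B)) - c * A =
        c * (2 * a₁ * (1 + a₁) * (N₂ + 1) - (A - 4 * B) * (N₁ + 1)) := by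
      subst hc hK hM hA hB; field_simp; ring
    rw [← sub_pos, this, mul_pos_iff_of_pos_left hc0, sub_pos]
  simp_rw [hgh]
  rw [exists_line_point_linear_gt_iff zero_le_two hc0.le (hD ▸ by positivity) hg11, hD, hcond,
    mul_pos_iff_of_pos_left hc0]
  exact and_congr_right' (imp_mul_lt_iff_of_lt (by linarith) (by positivity) (by positivity))
end

section
/- Let $a_1,a_2>0$, set $A=(1+a_1)(1+a_2)$, $B=a_1a_2$, and let $N_1,N_2$ be nonnegative integers. Suppose $(\alpha_1,\alpha_2)\in\mathbb{R}^2$ satisfies $g(\alpha_1,\alpha_2)=0$ and $h(\alpha_1,\alpha_2)>0$, where $g(\alpha_1,\alpha_2)=(3A-4B)\alpha_1+\frac{1+a_1}{a_2}(A-2B)\alpha_2-AN_1-\frac{1+a_1}{a_2}AN_2-\left(4+2\frac{1+a_1}{a_2}\right)(A-B)$ and $h(\alpha_1,\alpha_2)=\frac{4B-A}{A}(\alpha_1-1)+\frac{2a_1}{1+a_2}(\alpha_2-1)-(N_1+1)$. Then $J(\alpha_1-1,\alpha_2-1)>J(N_1+1,N_2+1)$. -/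
open Real

/-- The quadratic form `J(x,y) = a₂(1+a₂)/2 x² + a₁a₂ xy + a₁(1+a₁)/2 y²`. -/
noncomputable def Jform (a₁ a₂ x y : ℝ) : ℝ :=
  a₂ * (1 + a₂) / 2 * x ^ 2 + a₁ * a₂ * x * y + a₁ * (1 + a₁) / 2 * y ^ 2

set_option maxHeartbeats 1000000 in
set_option maxRecDepth 8000 in
/-- If `g(α₁,α₂)=0` and `h(α₁,α₂)>0`, then
`J(α₁-1,α₂-1) > J(N₁+1,N₂+1)`. -/
theorem J_gt_of_g_eq_zero_h_pos (a₁ a₂ : ℝ) (ha₁ : 0 < a₁) (ha₂ : 0 < a₂) (N₁ N₂ : ℕ)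
    (A B : ℝ) (hA : A = (1 + a₁) * (1 + a₂)) (hB : B = a₁ * a₂)
    (α₁ α₂ : ℝ)
    (hg : (3 * A - 4 * B) * α₁ + (1 + a₁) / a₂ * (A - 2 * B) * α₂
        - A * N₁ - (1 + a₁) / a₂ * A * N₂ - (4 + 2 * (1 + a₁) / a₂) * (A - B) = 0)
    (hh : 0 < (4 * B - A) / A * (α₁ - 1) + 2 * a₁ / (1 + a₂) * (α₂ - 1) - (N₁ + 1)) :
    Jform a₁ a₂ (N₁ + 1) (N₂ + 1) < Jform a₁ a₂ (α₁ - 1) (α₂ - 1) := by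
  subst hA hB
  have ha2 : a₂ ≠ 0 := ne_of_gt ha₂
  have h1a1 : (0:ℝ) < 1 + a₁ := by linarith
  have h1a2 : (0:ℝ) < 1 + a₂ := by linarith
  have hP : (-a₁^2*a₂*(N₂:ℝ) - a₁^2*a₂*α₂ - a₁^2*(N₂:ℝ) + a₁^2*α₂ - 2*a₁^2 - a₁*a₂^2*(N₁:ℝ) - a₁*a₂^2*α₁ - a₁*a₂*(N₁:ℝ) - 2*a₁*a₂*(N₂:ℝ) + 3*a₁*a₂*α₁ - 6*a₁*a₂ - 2*a₁*(N₂:ℝ) + 2*a₁*α₂ - 4*a₁ - a₂^2*(N₁:ℝ) + 3*a₂^2*α₁ - 4*a₂^2 - a₂*(N₁:ℝ) - a₂*(N₂:ℝ) + 3*a₂*α₁ + a₂*α₂ - 6*a₂ - (N₂:ℝ) + α₂ - 2*1) = 0 := by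
    field_simp at hg
    linear_combination hg
  have hH : 0 < (2*a₁^2*α₂ - 2*a₁^2 - a₁*a₂*(N₁:ℝ) + 3*a₁*a₂*α₁ - 4*a₁*a₂ - a₁*(N₁:ℝ) - a₁*α₁ + 2*a₁*α₂ - 2*a₁ - a₂*(N₁:ℝ) - a₂*α₁ - (N₁:ℝ) - α₁) := by
    have hApos : (0:ℝ) < (1+a₁)*(1+a₂) := mul_pos h1a1 h1a2
    have e : (2*a₁^2*α₂ - 2*a₁^2 - a₁*a₂*(N₁:ℝ) + 3*a₁*a₂*α₁ - 4*a₁*a₂ - a₁*(N₁:ℝ) - a₁*α₁ + 2*a₁*α₂ - 2*a₁ - a₂*(N₁:ℝ) - a₂*α₁ - (N₁:ℝ) - α₁)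
        = ((1+a₁)*(1+a₂)) * ((4*(a₁*a₂) - (1+a₁)*(1+a₂))/((1+a₁)*(1+a₂))*(α₁-1)
          + 2*a₁/(1+a₂)*(α₂-1) - (↑N₁+1)) := by
      field_simp
      ring
    rw [e]
    exact mul_pos hApos hh
  have hL : (0:ℝ) < (2*(1+a₁)*(1+a₂)*(1+a₁+a₂)*a₂*((N₁:ℝ)+1)) := by positivity
  have hQ : (0:ℝ) < (a₂*(1+a₁+a₂)) := by positivity
  have key : 2*((1+a₁)^3*(1+a₂)^2)*(Jform a₁ a₂ (α₁-1) (α₂-1) - Jform a₁ a₂ (↑N₁+1) (↑N₂+1))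
      = (2*(1+a₁)*(1+a₂)*(1+a₁+a₂)*a₂*((N₁:ℝ)+1))*(2*a₁^2*α₂ - 2*a₁^2 - a₁*a₂*(N₁:ℝ) + 3*a₁*a₂*α₁ - 4*a₁*a₂ - a₁*(N₁:ℝ) - a₁*α₁ + 2*a₁*α₂ - 2*a₁ - a₂*(N₁:ℝ) - a₂*α₁ - (N₁:ℝ) - α₁) + (a₂*(1+a₁+a₂))*(2*a₁^2*α₂ - 2*a₁^2 - a₁*a₂*(N₁:ℝ) + 3*a₁*a₂*α₁ - 4*a₁*a₂ - a₁*(N₁:ℝ) - a₁*α₁ + 2*a₁*α₂ - 2*a₁ - a₂*(N₁:ℝ) - a₂*α₁ - (N₁:ℝ) - α₁)^2 + (a₁*(a₁^2*a₂*(N₂:ℝ) - a₁^2*a₂*α₂ + 2*a₁^2*a₂ + a₁^2*(N₂:ℝ) + a₁^2*α₂ + a₁*a₂^2*(N₁:ℝ) - a₁*a₂^2*α₁ + 2*a₁*a₂^2 + a₁*a₂*(N₁:ℝ) + 2*a₁*a₂*(N₂:ℝ) + 3*a₁*a₂*α₁ + 2*a₁*(N₂:ℝ) + 2*a₁*α₂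 + a₂^2*(N₁:ℝ) + 3*a₂^2*α₁ - 2*a₂^2 + a₂*(N₁:ℝ) + a₂*(N₂:ℝ) + 3*a₂*α₁ + a₂*α₂ - 2*a₂ + (N₂:ℝ) + α₂))*(-a₁^2*a₂*(N₂:ℝ) - a₁^2*a₂*α₂ - a₁^2*(N₂:ℝ) + a₁^2*α₂ - 2*a₁^2 - a₁*a₂^2*(N₁:ℝ) - a₁*a₂^2*α₁ - a₁*a₂*(N₁:ℝ) - 2*a₁*a₂*(N₂:ℝ) + 3*a₁*a₂*α₁ - 6*a₁*a₂ - 2*a₁*(N₂:ℝ) + 2*a₁*α₂ - 4*a₁ - a₂^2*(N₁:ℝ) + 3*a₂^2*α₁ - 4*a₂^2 - a₂*(N₁:ℝ) - a₂*(N₂:ℝ) + 3*a₂*α₁ + a₂*α₂ - 6*a₂ - (N₂:ℝ) + α₂ - 2*1) := by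
    unfold Jform
    ring
  have hR : (0:ℝ) < (2*(1+a₁)*(1+a₂)*(1+a₁+a₂)*a₂*((N₁:ℝ)+1))*(2*a₁^2*α₂ - 2*a₁^2 - a₁*a₂*(N₁:ℝ) + 3*a₁*a₂*α₁ - 4*a₁*a₂ - a₁*(N₁:ℝ) - a₁*α₁ + 2*a₁*α₂ - 2*a₁ - a₂*(N₁:ℝ) - a₂*α₁ - (N₁:ℝ) - α₁) + (a₂*(1+a₁+a₂))*(2*a₁^2*α₂ - 2*a₁^2 - a₁*a₂*(N₁:ℝ) + 3*a₁*a₂*α₁ - 4*a₁*a₂ - a₁*(N₁:ℝ) - a₁*α₁ + 2*a₁*α₂ - 2*a₁ - a₂*(N₁:ℝ) - a₂*α₁ - (N₁:ℝ) - α₁)^2 + (a₁*(a₁^2*a₂*(N₂:ℝ) - a₁^2*a₂*α₂ + 2*a₁^2*a₂ + a₁^2*(N₂:ℝ) + a₁^2*α₂ + a₁*a₂^2*(N₁:ℝ) - a₁*a₂^2*α₁ + 2*a₁*a₂^2 + a₁*a₂*(N₁:ℝ) + 2*a₁*a₂*(N₂:ℝ) + 3*a₁*a₂*α₁ + 2*a₁*(N₂:ℝ)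 + 2*a₁*α₂ + a₂^2*(N₁:ℝ) + 3*a₂^2*α₁ - 2*a₂^2 + a₂*(N₁:ℝ) + a₂*(N₂:ℝ) + 3*a₂*α₁ + a₂*α₂ - 2*a₂ + (N₂:ℝ) + α₂))*(-a₁^2*a₂*(N₂:ℝ) - a₁^2*a₂*α₂ - a₁^2*(N₂:ℝ) + a₁^2*α₂ - 2*a₁^2 - a₁*a₂^2*(N₁:ℝ) - a₁*a₂^2*α₁ - a₁*a₂*(N₁:ℝ) - 2*a₁*a₂*(N₂:ℝ) + 3*a₁*a₂*α₁ - 6*a₁*a₂ - 2*a₁*(N₂:ℝ) + 2*a₁*α₂ - 4*a₁ - a₂^2*(N₁:ℝ) + 3*a₂^2*α₁ - 4*a₂^2 - a₂*(N₁:ℝ) - a₂*(N₂:ℝ) + 3*a₂*α₁ + a₂*α₂ - 6*a₂ - (N₂:ℝ) + α₂ - 2*1) := by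
    rw [hP, mul_zero]
    have t1 := mul_pos hL hH
    have t2 := mul_pos hQ (pow_pos hH 2)
    linarith
  have hC : (0:ℝ) < 2*((1+a₁)^3*(1+a₂)^2) := by positivity
  have h2 : (0:ℝ) < 2*((1+a₁)^3*(1+a₂)^2)*(Jform a₁ a₂ (α₁-1) (α₂-1) - Jform a₁ a₂ (↑N₁+1) (↑N₂+1)) := by
    rw [key]; exact hR
  rcases mul_pos_iff.mp h2 with ⟨_, hd⟩ | ⟨hneg, _⟩
  · linarith
  · linarith
end

section
/- Let $a_1,a_2>0$, set $A=(1+a_1)(1+a_2)$ and $B=a_1a_2$. For any real numbers $\tilde\gamma,\tilde N_1,\tilde N_2$, define $\tilde\alpha_1=\frac{2B-A}{A}\tilde\gamma+\frac{2B}{A}\tilde N_1+\frac{2a_1}{1+a_2}\tilde N_2$ and $\tilde\alpha_2=\frac{a_2}{1+a_1}(\tilde\gamma+\tilde N_1)+\tilde N_2-\frac{2a_2}{1+a_1}\tilde\alpha_1$. Then $J(\tilde\alpha_1,\tilde\alpha_2)=J(\tilde N_1,\tilde N_2)+\frac{a_2(1+a_1+a_2)}{2(1+a_1)}\left(\tilde\gamma^2-\tilde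 N_1^2\right)$. -/
open Real

/-- the value of `J` at `(α̃₁, α̃₂)`. -/
theorem J_value (a₁ a₂ : ℝ) (ha₁ : 0 < a₁) (ha₂ : 0 < a₂)
    (A B : ℝ) (hA : A = (1 + a₁) * (1 + a₂)) (hB : B = a₁ * a₂)
    (γ' N₁' N₂' α₁' α₂' : ℝ)
    (hα₁' : α₁' = (2 * B - A) / A * γ' + 2 * B / A * N₁' + 2 * a₁ / (1 + a₂) * N₂')
    (hα₂' : α₂' = a₂ / (1 + a₁) * (γ' + N₁') + N₂' - 2 * a₂ / (1 + a₁) * α₁') :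
    Jform a₁ a₂ α₁' α₂' =
      Jform a₁ a₂ N₁' N₂' + a₂ * (1 + a₁ + a₂) / (2 * (1 + a₁)) * (γ' ^ 2 - N₁' ^ 2) := by
  have h1 : (1 + a₁) ≠ 0 := by positivity
  have h2 : (1 + a₂) ≠ 0 := by positivity
  subst hA hB hα₂' hα₁'
  unfold Jform
  field_simp
  ring
end

section
/- (Pohozaev identity) Let $a_1,a_2>0$ and let $u_1,u_2$ be twice continuously differentiable real functions on an open interval $I\subseteq(0,\infty)$ which satisfy the radial system $u_1''(r)+\frac{1}{r}u_1'(r)=(1+a_1)F_1(r)-a_1F_2(r)$, $u_2''(r)+\frac{1}{r}u_2'(r)=(1+a_2)F_2(r)-a_2F_1(r)$ on $I$, where $F_k(r)=(1+a_k)e^{2u_k(r)}-e^{u_k(r)}-a_k e^{u_1(r)+u_2(r)}$ for $k=1,2$. Then for every $r\in I$, $\frac{d}{dr}\Big\{J(ru_1'(r)+2,\,ru_2'(r)+2)+(1+a_1+a_2)r^2\Big[a_2e^{u_1}+a_1e^{u_2}-\frac{a_2(1+a_1)}{2}e^{2u_1}-\frac{a_1(1+a_2)}{2}e^{2u_2}+a_1a_2e^{u_1+u_2}\Big]\Big\}=(1+a_1+a_2)r\left[a_2(1+a_1)e^{2u_1}+a_1(1+a_2)e^{2u_2}-2a_1a_2e^{u_1+u_2}\right]$.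 -/
/-!
Put `v_k = r u_k' + 2`. The radial equation says exactly `v_k' = r Δu_k`, where `Δu_k` is the
right-hand side of the `k`-th equation. The matrix of `J` times the coupling matrix
`[[1+a₁, -a₁], [-a₂, 1+a₂]]` of the system is `(1+a₁+a₂) diag(a₂, a₁)`, so
`d/dr J(v₁, v₂) = (1+a₁+a₂) r (a₂ v₁ F₁ + a₁ v₂ F₂)`. The bracketed potential `G(u₁, u₂)` has
gradient `-(a₂ F₁, a₁ F₂)`, so the `r u_k'` parts of `v_k` cancel against `r² d/dr G`, and what is
left is `(1+a₁+a₂) r (2 a₂ F₁ + 2 a₁ F₂ + 2 G)`, which is the right-hand side.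
-/

open Real Set

noncomputable def radialNonlinearity (a s t : ℝ) : ℝ :=
  (1 + a) * exp (2 * s) - exp s - a * exp (s + t)

noncomputable def pohozaevPotential (a₁ a₂ s t : ℝ) : ℝ :=
  a₂ * exp s + a₁ * exp t - a₂ * (1 + a₁) / 2 * exp (2 * s)
    - a₁ * (1 + a₂) / 2 * exp (2 * t) + a₁ * a₂ * exp (s + t)

theorem ContDiffOn.hasDerivAt_deriv {𝕜 : Type*} [NontriviallyNormedField 𝕜] {E : Type*}
    [NormedAddCommGroup E] [NormedSpace 𝕜 E] {f : 𝕜 → E} {s : Set 𝕜} {x : 𝕜}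
    (hf : ContDiffOn 𝕜 2 f s) (hs : IsOpen s) (hx : x ∈ s) :
    HasDerivAt (deriv f) (deriv (deriv f) x) x :=
  (((hf.deriv_of_isOpen (m := 1) hs (by norm_num)).contDiffAt (hs.mem_nhds hx)).differentiableAt
    one_ne_zero).hasDerivAt

theorem hasDerivAt_mul_add_of_radial {v : ℝ → ℝ} {v' f r : ℝ} (c : ℝ) (hr : r ≠ 0)
    (hv : HasDerivAt v v' r) (hode : v' + 1 / r * v r = f) :
    HasDerivAt (fun t => t * v t + c) (r * f) r := by
  refine (((hasDerivAt_id' r).mul hv).add_const c).congr_deriv ?_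
  rw [← hode]
  field_simp
  ring

theorem HasDerivAt.Jform (a₁ a₂ : ℝ) {x y : ℝ → ℝ} {x' y' r : ℝ}
    (hx : HasDerivAt x x' r) (hy : HasDerivAt y y' r) :
    HasDerivAt (fun t => Jform a₁ a₂ (x t) (y t))
      ((a₂ * (1 + a₂) * x r + a₁ * a₂ * y r) * x' + (a₁ * a₂ * x r + a₁ * (1 + a₁) * y r) * y')
      r := by
  refine ((((hx.pow 2).const_mul _).add ((hx.const_mul (a₁ * a₂)).mul hy)).add
    ((hy.pow 2).const_mul _)).congr_deriv ?_
  push_cast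
  ring

theorem Jform_gradient_mul_coupling (a₁ a₂ x y f₁ f₂ : ℝ) :
    (a₂ * (1 + a₂) * x + a₁ * a₂ * y) * ((1 + a₁) * f₁ - a₁ * f₂)
      + (a₁ * a₂ * x + a₁ * (1 + a₁) * y) * ((1 + a₂) * f₂ - a₂ * f₁)
      = (1 + a₁ + a₂) * (a₂ * x * f₁ + a₁ * y * f₂) := by
  ring

theorem HasDerivAt.pohozaevPotential (a₁ a₂ : ℝ) {u₁ u₂ : ℝ → ℝ} {p q r : ℝ}
    (h₁ : HasDerivAt u₁ p r) (h₂ : HasDerivAt u₂ q r) :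
    HasDerivAt (fun t => pohozaevPotential a₁ a₂ (u₁ t) (u₂ t))
      (-(a₂ * radialNonlinearity a₁ (u₁ r) (u₂ r) * p
        + a₁ * radialNonlinearity a₂ (u₂ r) (u₁ r) * q)) r := by
  refine ((((h₁.exp.const_mul a₂).add (h₂.exp.const_mul a₁)).sub
    ((h₁.const_mul 2).exp.const_mul _)).sub ((h₂.const_mul 2).exp.const_mul _)).add
    ((h₁.add h₂).exp.const_mul _) |>.congr_deriv ?_
  simp only [radialNonlinearity, Pi.add_apply, add_comm (u₂ r) (u₁ r)]
  ring

theorem pohozaev_identity_general (a₁ a₂ : ℝ)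
    (I : Set ℝ) (hIopen : IsOpen I) (hIsub : I ⊆ Ioi 0)
    (u₁ u₂ : ℝ → ℝ)
    (hu₁ : ContDiffOn ℝ 2 u₁ I) (hu₂ : ContDiffOn ℝ 2 u₂ I)
    (F₁ F₂ : ℝ → ℝ)
    (hF₁ : ∀ r, F₁ r = (1 + a₁) * exp (2 * u₁ r) - exp (u₁ r) - a₁ * exp (u₁ r + u₂ r))
    (hF₂ : ∀ r, F₂ r = (1 + a₂) * exp (2 * u₂ r) - exp (u₂ r) - a₂ * exp (u₁ r + u₂ r))
    (hode₁ : ∀ r ∈ I, deriv (deriv u₁) r + (1 / r) * deriv u₁ r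
        = (1 + a₁) * F₁ r - a₁ * F₂ r)
    (hode₂ : ∀ r ∈ I, deriv (deriv u₂) r + (1 / r) * deriv u₂ r
        = (1 + a₂) * F₂ r - a₂ * F₁ r) :
    ∀ r ∈ I,
      HasDerivAt (fun t => Jform a₁ a₂ (t * deriv u₁ t + 2) (t * deriv u₂ t + 2)
          + (1 + a₁ + a₂) * t ^ 2 *
            (a₂ * exp (u₁ t) + a₁ * exp (u₂ t)
              - a₂ * (1 + a₁) / 2 * exp (2 * u₁ t)
              - a₁ * (1 + a₂) / 2 * exp (2 * u₂ t)
              + a₁ * a₂ * exp (u₁ t + u₂ t)))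
        ((1 + a₁ + a₂) * r *
          (a₂ * (1 + a₁) * exp (2 * u₁ r) + a₁ * (1 + a₂) * exp (2 * u₂ r)
            - 2 * a₁ * a₂ * exp (u₁ r + u₂ r))) r := by
  intro r hr
  have hr0 : r ≠ 0 := (hIsub hr).ne'
  have hdiff {u : ℝ → ℝ} (hu : ContDiffOn ℝ 2 u I) : HasDerivAt u (deriv u r) r :=
    ((hu.contDiffAt (hIopen.mem_nhds hr)).differentiableAt (by norm_num)).hasDerivAt
  have hv₁ := hasDerivAt_mul_add_of_radial 2 hr0 (hu₁.hasDerivAt_deriv hIopen hr) (hode₁ r hr)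
  have hv₂ := hasDerivAt_mul_add_of_radial 2 hr0 (hu₂.hasDerivAt_deriv hIopen hr) (hode₂ r hr)
  have hG := (hdiff hu₁).pohozaevPotential a₁ a₂ (hdiff hu₂)
  have hF₁r : F₁ r = radialNonlinearity a₁ (u₁ r) (u₂ r) := hF₁ r
  have hF₂r : F₂ r = radialNonlinearity a₂ (u₂ r) (u₁ r) := by
    rw [hF₂, radialNonlinearity, add_comm (u₂ r)]
  refine ((hv₁.Jform a₁ a₂ hv₂).add
    (((hasDerivAt_pow 2 r).const_mul (1 + a₁ + a₂)).mul hG)).congr_deriv ?_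
  have hJ := Jform_gradient_mul_coupling a₁ a₂ (r * deriv u₁ r + 2) (r * deriv u₂ r + 2)
    (F₁ r) (F₂ r)
  rw [← hF₁r, ← hF₂r, pohozaevPotential]
  linear_combination r * hJ + (1 + a₁ + a₂) * 2 * r * (a₂ * hF₁ r + a₁ * hF₂ r)

/-- Pohozaev identity. -/
theorem pohozaev_identity (a₁ a₂ : ℝ) (ha₁ : 0 < a₁) (ha₂ : 0 < a₂)
    (I : Set ℝ) (hIopen : IsOpen I) (hIconn : I.OrdConnected) (hIsub : I ⊆ Ioi 0)
    (u₁ u₂ : ℝ → ℝ)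
    (hu₁ : ContDiffOn ℝ 2 u₁ I) (hu₂ : ContDiffOn ℝ 2 u₂ I)
    (F₁ F₂ : ℝ → ℝ)
    (hF₁ : ∀ r, F₁ r = (1 + a₁) * exp (2 * u₁ r) - exp (u₁ r) - a₁ * exp (u₁ r + u₂ r))
    (hF₂ : ∀ r, F₂ r = (1 + a₂) * exp (2 * u₂ r) - exp (u₂ r) - a₂ * exp (u₁ r + u₂ r))
    (hode₁ : ∀ r ∈ I, deriv (deriv u₁) r + (1 / r) * deriv u₁ r
        = (1 + a₁) * F₁ r - a₁ * F₂ r)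
    (hode₂ : ∀ r ∈ I, deriv (deriv u₂) r + (1 / r) * deriv u₂ r
        = (1 + a₂) * F₂ r - a₂ * F₁ r) :
    ∀ r ∈ I,
      HasDerivAt (fun t => Jform a₁ a₂ (t * deriv u₁ t + 2) (t * deriv u₂ t + 2)
          + (1 + a₁ + a₂) * t ^ 2 *
            (a₂ * exp (u₁ t) + a₁ * exp (u₂ t)
              - a₂ * (1 + a₁) / 2 * exp (2 * u₁ t)
              - a₁ * (1 + a₂) / 2 * exp (2 * u₂ t)
              + a₁ * a₂ * exp (u₁ t + u₂ t)))
        ((1 + a₁ + a₂) * r *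
          (a₂ * (1 + a₁) * exp (2 * u₁ r) + a₁ * (1 + a₂) * exp (2 * u₂ r)
            - 2 * a₁ * a₂ * exp (u₁ r + u₂ r))) r :=
  pohozaev_identity_general a₁ a₂ I hIopen hIsub u₁ u₂ hu₁ hu₂ F₁ F₂ hF₁ hF₂ hode₁ hode₂
end

section
/- Let $a_2>0$ and $D>2$. Suppose $\omega$ is a twice continuously differentiable real function on $(0,\infty)$ satisfying $\omega''(r)+\frac{1}{r}\omega'(r)=-(1+a_2)e^{\omega(r)}$ for all $r>0$, $\int_0^\infty r\,e^{\omega(r)}\,dr<\infty$, $\omega'(1)=0$, $\omega(1)=\ln\frac{D^2-4}{2(1+a_2)}$, and such that $\lim_{r\to0^+}r\,\omega'(r)$ exists and belongs to the interval $(0,\,D-2]$. Then $\omega(r)=\ln\frac{2D^2(D^2-4)r^{D-2}}{(1+a_2)(D+2+(D-2)r^D)^2}$ for all $r>0$. -/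
/-!
Writing the equation as `(r ω')' = -c r e^ω` with `c = 1 + a₂`, the pair `(ω, r ω')` is an integral
curve of a first-order system on `r > 0` whose right-hand side is Lipschitz in the unknowns on every
half-space `{ω ≤ M}`, uniformly for `r` in a compact subinterval of `(0, ∞)`. The explicit bubble
solves the same system and has the same Cauchy data `(log ((D² - 4) / (2c)), 0)` at `r = 1`, so
the Grönwall uniqueness theorem forces `ω` to be the bubble on every compact subinterval.
-/

open Real Set Filter Topology MeasureTheory

/-- The radial Liouville equation `w'' + w' / r = -c e^w` as a first-order system for
`x = (w, r w')`. -/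
noncomputable def liouvilleField (c r : ℝ) (x : ℝ × ℝ) : ℝ × ℝ := (x.2 / r, -c * r * exp x.1)

lemma abs_exp_sub_exp_le {M x y : ℝ} (hx : x ≤ M) (hy : y ≤ M) :
    |exp x - exp y| ≤ exp M * |x - y| :=
  (convex_Iic M).norm_image_sub_le_of_norm_deriv_le (fun _ _ => differentiableAt_exp)
    (fun z hz => by rw [Real.deriv_exp, norm_of_nonneg (exp_pos z).le]; exact exp_le_exp.2 hz)
    hy hx

lemma lipschitzOnWith_liouvilleField (c M : ℝ) {a b r : ℝ} (ha : 0 < a) (hr : r ∈ Icc a b) :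
    LipschitzOnWith (a⁻¹ + |c| * b * exp M).toNNReal (liouvilleField c r) (Iic M ×ˢ univ) := by
  have hr0 : 0 < r := ha.trans_le hr.1
  have hb : 0 ≤ b := hr0.le.trans hr.2
  refine LipschitzOnWith.of_dist_le_mul fun x hx y hy => ?_
  rw [Real.coe_toNNReal _ (by positivity), Prod.dist_eq, Prod.dist_eq]
  simp only [liouvilleField, Real.dist_eq]
  set d := max |x.1 - y.1| |x.2 - y.2|
  have hd1 : |x.1 - y.1| ≤ d := le_max_left _ _
  have hd2 : |x.2 - y.2| ≤ d := le_max_right _ _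
  have hd : 0 ≤ d := (abs_nonneg _).trans hd1
  have h1 : |x.2 / r - y.2 / r| ≤ a⁻¹ * d := by
    rw [← sub_div, abs_div, abs_of_pos hr0, div_eq_inv_mul]
    gcongr
    exact hr.1
  have h2 : |-c * r * exp x.1 - -c * r * exp y.1| ≤ |c| * b * exp M * d := by
    rw [show -c * r * exp x.1 - -c * r * exp y.1 = -(c * r) * (exp x.1 - exp y.1) by ring,
      abs_mul, abs_neg, abs_mul, abs_of_pos hr0, mul_assoc (|c| * b)]
    have hexp : |exp x.1 - exp y.1| ≤ exp M * d :=
      (abs_exp_sub_exp_le hx.1 hy.1).trans (by gcongr)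
    exact mul_le_mul (by gcongr; exact hr.2) hexp (abs_nonneg _) (by positivity)
  have hK : 0 ≤ |c| * b * exp M := by positivity
  apply max_le <;> nlinarith [inv_pos.2 ha]

lemma eqOn_Ioo_of_hasDerivAt_liouvilleField {c M a b t₀ : ℝ} {u v : ℝ → ℝ × ℝ} (ha : 0 < a)
    (ht₀ : t₀ ∈ Ioo a b)
    (hu : ∀ t ∈ Ioo a b, HasDerivAt u (liouvilleField c t (u t)) t ∧ (u t).1 ≤ M)
    (hv : ∀ t ∈ Ioo a b, HasDerivAt v (liouvilleField c t (v t)) t ∧ (v t).1 ≤ M)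
    (h : u t₀ = v t₀) : EqOn u v (Ioo a b) :=
  ODE_solution_unique_of_mem_Ioo
    (fun _ ht => lipschitzOnWith_liouvilleField c M ha (Ioo_subset_Icc_self ht)) ht₀
    (fun t ht => ⟨(hu t ht).1, (hu t ht).2, mem_univ _⟩)
    (fun t ht => ⟨(hv t ht).1, (hv t ht).2, mem_univ _⟩) h

lemma eqOn_Ioi_of_hasDerivAt_liouvilleField {c t₀ : ℝ} {u v : ℝ → ℝ × ℝ} (ht₀ : 0 < t₀)
    (hu : ∀ t > 0, HasDerivAt u (liouvilleField c t (u t)) t)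
    (hv : ∀ t > 0, HasDerivAt v (liouvilleField c t (v t)) t)
    (h : u t₀ = v t₀) : EqOn u v (Ioi 0) := by
  intro t ht
  obtain ⟨a, b, ha, hta, htb⟩ : ∃ a b, 0 < a ∧ t ∈ Ioo a b ∧ t₀ ∈ Ioo a b :=
    ⟨min t t₀ / 2, max t t₀ + 1, half_pos (lt_min ht ht₀),
      ⟨by linarith [min_le_left t t₀, lt_min ht ht₀], by linarith [le_max_left t t₀]⟩,
      ⟨by linarith [min_le_right t t₀, lt_min ht ht₀], by linarith [le_max_right t t₀]⟩⟩
  have hsub : Icc a b ⊆ Ioi 0 := fun s hs => ha.trans_le hs.1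
  have bound : ∀ w : ℝ → ℝ × ℝ, (∀ t > 0, HasDerivAt w (liouvilleField c t (w t)) t) →
      ∃ M, ∀ s ∈ Icc a b, (w s).1 ≤ M := fun w hw =>
    (isCompact_Icc.bddAbove_image (continuous_fst.comp_continuousOn
      (HasDerivAt.continuousOn fun s hs => hw s (hsub hs)))).imp fun M hM s hs => hM ⟨s, hs, rfl⟩
  obtain ⟨Mu, hMu⟩ := bound u hu
  obtain ⟨Mv, hMv⟩ := bound v hv
  refine eqOn_Ioo_of_hasDerivAt_liouvilleField (c := c) (M := max Mu Mv) ha htb ?_ ?_ h hta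
  · exact fun s hs => ⟨hu s (hsub (Ioo_subset_Icc_self hs)),
      (hMu s (Ioo_subset_Icc_self hs)).trans (le_max_left _ _)⟩
  · exact fun s hs => ⟨hv s (hsub (Ioo_subset_Icc_self hs)),
      (hMv s (Ioo_subset_Icc_self hs)).trans (le_max_right _ _)⟩

lemma hasDerivAt_liouvilleField_of_contDiffOn {c : ℝ} {w : ℝ → ℝ}
    (hw : ContDiffOn ℝ 2 w (Ioi 0))
    (hode : ∀ r > (0 : ℝ), deriv (deriv w) r + (1 / r) * deriv w r = -c * exp (w r))
    {r : ℝ} (hr : 0 < r) :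
    HasDerivAt (fun t => (w t, t * deriv w t)) (liouvilleField c r (w r, r * deriv w r)) r := by
  have hnhds : Ioi (0 : ℝ) ∈ 𝓝 r := Ioi_mem_nhds hr
  have hw' : HasDerivAt w (deriv w r) r :=
    ((hw.contDiffAt hnhds).differentiableAt two_ne_zero).hasDerivAt
  have hw'' : HasDerivAt (deriv w) (deriv (deriv w) r) r :=
    (((hw.deriv_of_isOpen (m := 1) isOpen_Ioi (by norm_num)).contDiffAt hnhds).differentiableAt
      one_ne_zero).hasDerivAt
  have hflux : HasDerivAt (fun t => t * deriv w t) (-c * r * exp (w r)) r := by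
    refine ((hasDerivAt_id' r).mul hw'').congr_deriv ?_
    have := hode r hr
    field_simp at this
    linear_combination this
  refine (hw'.prodMk hflux).congr_deriv ?_
  simp only [liouvilleField, mul_div_cancel_left₀ _ hr.ne']

noncomputable def liouvilleBubble (c D r : ℝ) : ℝ :=
  log (2 * D ^ 2 * (D ^ 2 - 4) * r ^ (D - 2) / (c * (D + 2 + (D - 2) * r ^ D) ^ 2))

noncomputable def liouvilleBubbleFlux (D r : ℝ) : ℝ :=
  (D ^ 2 - 4) * (1 - r ^ D) / (D + 2 + (D - 2) * r ^ D)

section Bubble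

variable {c D r : ℝ}

lemma liouvilleBubble_denom_pos (hD : 2 < D) (hr : 0 ≤ r) : 0 < D + 2 + (D - 2) * r ^ D := by
  have : 0 ≤ (D - 2) * r ^ D := mul_nonneg (by linarith) (rpow_nonneg hr D)
  linarith

lemma hasDerivAt_liouvilleBubble_denom (hr : 0 < r) :
    HasDerivAt (fun t => D + 2 + (D - 2) * t ^ D) ((D - 2) * (D * r ^ (D - 1))) r :=
  ((hasDerivAt_rpow_const (Or.inl hr.ne')).const_mul (D - 2)).const_add (D + 2)

lemma liouvilleBubble_eq (hc : 0 < c) (hD : 2 < D) (hr : 0 < r) :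
    liouvilleBubble c D r = log (2 * D ^ 2 * (D ^ 2 - 4) / c) + (D - 2) * log r
      - 2 * log (D + 2 + (D - 2) * r ^ D) := by
  have hA : 0 < 2 * D ^ 2 * (D ^ 2 - 4) := mul_pos (by nlinarith) (by nlinarith)
  have hg := liouvilleBubble_denom_pos hD hr.le
  have hrD : 0 < r ^ (D - 2) := rpow_pos_of_pos hr _
  rw [liouvilleBubble, log_div (by positivity) (by positivity), log_mul hA.ne' hrD.ne',
    log_mul hc.ne' (by positivity), log_rpow hr, log_pow, log_div hA.ne' hc.ne']
  push_cast
  ring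

lemma hasDerivAt_liouvilleBubble (hc : 0 < c) (hD : 2 < D) (hr : 0 < r) :
    HasDerivAt (liouvilleBubble c D) (liouvilleBubbleFlux D r / r) r := by
  have hg := liouvilleBubble_denom_pos hD hr.le
  have hsum := (((hasDerivAt_log hr.ne').const_mul (D - 2)).const_add
    (log (2 * D ^ 2 * (D ^ 2 - 4) / c))).sub
    (((hasDerivAt_liouvilleBubble_denom hr).log hg.ne').const_mul 2)
  have heq : liouvilleBubble c D =ᶠ[𝓝 r] fun t => log (2 * D ^ 2 * (D ^ 2 - 4) / c)
      + (D - 2) * log t - 2 * log (D + 2 + (D - 2) * t ^ D) :=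
    eventually_of_mem (Ioi_mem_nhds hr) fun t ht => liouvilleBubble_eq hc hD ht
  refine (hsum.congr_of_eventuallyEq heq).congr_deriv ?_
  rw [liouvilleBubbleFlux, rpow_sub_one hr.ne']
  field_simp
  ring

lemma hasDerivAt_liouvilleBubbleFlux (hc : 0 < c) (hD : 2 < D) (hr : 0 < r) :
    HasDerivAt (liouvilleBubbleFlux D) (-c * r * exp (liouvilleBubble c D r)) r := by
  have hg := liouvilleBubble_denom_pos hD hr.le
  have hA : 0 < 2 * D ^ 2 * (D ^ 2 - 4) := mul_pos (by nlinarith) (by nlinarith)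
  have hq := (((hasDerivAt_rpow_const (p := D) (Or.inl hr.ne')).const_sub 1).const_mul
    (D ^ 2 - 4)).div (hasDerivAt_liouvilleBubble_denom hr) hg.ne'
  refine hq.congr_deriv ?_
  rw [liouvilleBubble, exp_log (by positivity), rpow_sub_one hr.ne', rpow_sub hr, rpow_two]
  field_simp
  ring

lemma hasDerivAt_liouvilleBubble_liouvilleField (hc : 0 < c) (hD : 2 < D) (hr : 0 < r) :
    HasDerivAt (fun t => (liouvilleBubble c D t, liouvilleBubbleFlux D t))
      (liouvilleField c r (liouvilleBubble c D r, liouvilleBubbleFlux D r)) r :=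
  (hasDerivAt_liouvilleBubble hc hD hr).prodMk (hasDerivAt_liouvilleBubbleFlux hc hD hr)

lemma liouvilleBubble_one (hD : 2 < D) : liouvilleBubble c D 1 = log ((D ^ 2 - 4) / (2 * c)) := by
  have hD0 : D ≠ 0 := by positivity
  rw [liouvilleBubble, one_rpow, one_rpow, show D + 2 + (D - 2) * 1 = 2 * D by ring]
  congr 1
  field_simp

lemma liouvilleBubbleFlux_one : liouvilleBubbleFlux D 1 = 0 := by
  simp [liouvilleBubbleFlux]

end Bubble

theorem omega2_classification_general (a₂ D : ℝ) (ha₂ : 0 < a₂) (hD : 2 < D)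
    (ω : ℝ → ℝ) (hsm : ContDiffOn ℝ 2 ω (Ioi 0))
    (hode : ∀ r > (0 : ℝ), deriv (deriv ω) r + (1 / r) * deriv ω r = -(1 + a₂) * exp (ω r))
    (hd1 : deriv ω 1 = 0)
    (hv1 : ω 1 = log ((D ^ 2 - 4) / (2 * (1 + a₂)))) :
    ∀ r > (0 : ℝ), ω r =
      log (2 * D ^ 2 * (D ^ 2 - 4) * r ^ (D - 2)
        / ((1 + a₂) * (D + 2 + (D - 2) * r ^ D) ^ 2)) := by
  have hc : 0 < 1 + a₂ := by linarith
  have heq := eqOn_Ioi_of_hasDerivAt_liouvilleField one_pos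
    (fun r hr => hasDerivAt_liouvilleField_of_contDiffOn hsm hode hr)
    (fun r hr => hasDerivAt_liouvilleBubble_liouvilleField hc hD hr)
    (by rw [hd1, hv1, liouvilleBubble_one hD, liouvilleBubbleFlux_one, mul_zero])
  exact fun r hr => congrArg Prod.fst (heq hr)

/-- classification of radial solutions of the Liouville equation with the
given normalizations. -/
theorem omega2_classification (a₂ D : ℝ) (ha₂ : 0 < a₂) (hD : 2 < D)
    (ω : ℝ → ℝ) (hsm : ContDiffOn ℝ 2 ω (Ioi 0))
    (hode : ∀ r > (0 : ℝ), deriv (deriv ω) r + (1 / r) * deriv ω r = -(1 + a₂) * exp (ω r))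
    (hint : IntegrableOn (fun r => r * exp (ω r)) (Ioi 0))
    (hd1 : deriv ω 1 = 0)
    (hv1 : ω 1 = log ((D ^ 2 - 4) / (2 * (1 + a₂))))
    (hlim : ∃ L ∈ Ioc (0 : ℝ) (D - 2),
      Tendsto (fun r => r * deriv ω r) (𝓝[>] 0) (𝓝 L)) :
    ∀ r > (0 : ℝ), ω r =
      log (2 * D ^ 2 * (D ^ 2 - 4) * r ^ (D - 2)
        / ((1 + a₂) * (D + 2 + (D - 2) * r ^ D) ^ 2)) :=
  omega2_classification_general a₂ D ha₂ hD ω hsm hode hd1 hv1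
end

section
/- Let $a_1,a_2>0$, set $A=(1+a_1)(1+a_2)$ and $B=a_1a_2$. For any real numbers $\tilde\gamma,\tilde N_1,\tilde N_2$, define $G=-\frac{2a_2}{1+a_1}(\tilde\gamma+\tilde N_1)-2\tilde N_2$, $E=2\frac{2B-A}{A}\tilde\gamma+\frac{4B}{A}\tilde N_1+\frac{4a_1}{1+a_2}\tilde N_2$, and $F=-\frac{4a_2}{1+a_1}\frac{A-B}{A}\tilde\gamma-\frac{2a_2}{1+a_1}\frac{A-2B}{A}\tilde N_1-2\frac{A-2B}{A}\tilde N_2$. Then $J(E,G)-J(0,F)=\frac{a_2(A-B)}{2(1+a_1)}E^2$. -/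
open Real
set_option maxHeartbeats 1000000

/-- the algebraic identity `J(E,G) - J(0,F) = a₂(A-B)/(2(1+a₁)) E²`. -/
theorem J_identity_EGF (a₁ a₂ : ℝ) (ha₁ : 0 < a₁) (ha₂ : 0 < a₂)
    (A B : ℝ) (hA : A = (1 + a₁) * (1 + a₂)) (hB : B = a₁ * a₂)
    (γ' N₁' N₂' G E F : ℝ)
    (hG : G = -(2 * a₂ / (1 + a₁)) * (γ' + N₁') - 2 * N₂')
    (hE : E = 2 * ((2 * B - A) / A) * γ' + 4 * B / A * N₁' + 4 * a₁ / (1 + a₂) * N₂')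
    (hF : F = -(4 * a₂ / (1 + a₁)) * ((A - B) / A) * γ'
      - 2 * a₂ / (1 + a₁) * ((A - 2 * B) / A) * N₁' - 2 * ((A - 2 * B) / A) * N₂') :
    Jform a₁ a₂ E G - Jform a₁ a₂ 0 F = a₂ * (A - B) / (2 * (1 + a₁)) * E ^ 2 := by
  have h1 : (1 + a₁) ≠ 0 := by positivity
  have h2 : (1 + a₂) ≠ 0 := by positivity
  have hA0 : A ≠ 0 := by rw [hA]; positivity
  -- key linear relation: F = G + (a₂/(1+a₁)) E
  have hFG : F = G + a₂ / (1 + a₁) * E := by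
    rw [hF, hG, hE, hB]
    field_simp
    rw [hA]
    ring
  have hAB : A - B = (1 + a₁) * (1 + a₂) - a₁ * a₂ := by rw [hA, hB]
  rw [hFG, hAB]
  unfold Jform
  field_simp
  ring
end
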